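/- In the small-coupling setting (u ≡ 0, b̃_n = b⁰_n + t v_n), for every λ ∈ ℂ the coefficient of t¹ in the polynomial t ↦ J(λ,t) equals J_1(λ) = −(1/a⁰_0)·Σ_{k=0}^{p} v_k·(φ_q(λ)θ_k(λ)² + 2φ̂(λ)θ_k(λ)φ_k(λ) − θ_{q+1}(λ)φ_k(λ)²), i.e. ∂J/∂t(λ,0) = J_1(λ). -/

import Mathlib

open Polynomial Asymptotics Filter

/-!
Differentiating the perturbed recurrence at `t = 0` shows that `D n = ∂ₜ F(n, t)|₀`, for
`F = θ̃` or `φ̃`, solves the unperturbed recurrence with source `v n * F(n, 0)`, and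
`F(·, 0)` is the unperturbed solution `K = θ` or `φ`, since both agree beyond `p`.
For an unperturbed solution `u`, the Casoratian `a n * (u n * D (n + 1) - u (n + 1) * D n)`
then drops by `v n * K n * u n` at each step and vanishes beyond `p`, so
`a 0 * (u 0 * D 1 - u 1 * D 0) = ∑_{k=1}^{p} v k * K k * u k`. With `u = θ` and `u = φ`
this gives `D 0` and `D 1`, which is all `∂ₜ J(λ, 0)` involves; the explicit `t v₀ / a₀`
term of `J` supplies the `k = 0` summand.
-/

theorem Int.forall_of_forall_gt_of_two_step {P : ℤ → Prop} (m : ℤ) (hgt : ∀ n, m < n → P n)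
    (hstep : ∀ n, P (n + 1) → P (n + 2) → P n) (n : ℤ) : P n := by
  have hpair : ∀ k ≤ m + 1, P k ∧ P (k + 1) := by
    refine Int.leInductionDown ⟨hgt _ (by lia), hgt _ (by lia)⟩ fun k _ ⟨hk, hk1⟩ => ?_
    rw [sub_add_cancel]
    refine ⟨hstep _ (by rwa [sub_add_cancel]) ?_, hk⟩
    rwa [show k - 1 + 2 = k + 1 by ring]
  rcases le_or_gt n (m + 1) with hn | hn
  · exact (hpair n hn).1
  · exact hgt n (by lia)

section JacobiRecurrence

variable {R : Type*} [CommRing R]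

def IsJacobiSolution (A B : ℤ → R) (lam : R) (y : ℤ → R) : Prop :=
  ∀ n, A (n - 1) * y (n - 1) + A n * y (n + 1) + B n * y n = lam * y n

def casoratian (A u y : ℤ → R) (n : ℤ) : R :=
  A n * (u n * y (n + 1) - u (n + 1) * y n)

variable {A B u y f : ℤ → R} {lam : R}

theorem IsJacobiSolution.aeval {S : Type*} [CommRing S] [Algebra R S] {y : ℤ → R[X]} (h : IsJacobiSolution (fun n => C (A n)) (fun n => C (B n)) X y) (x : S) :
    IsJacobiSolution (fun n => algebraMap R S (A n)) (fun n => algebraMap R S (B n)) x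
      (fun n => Polynomial.aeval x (y n)) := fun n => by
  simpa using congrArg (Polynomial.aeval x) (h n)

theorem IsJacobiSolution.mul_apply_eq (hy : IsJacobiSolution A B lam y) (n : ℤ) :
    A n * y n = (lam - B (n + 1)) * y (n + 1) - A (n + 1) * y (n + 2) := by
  have h := hy (n + 1)
  rw [add_sub_cancel_right, show n + 1 + 1 = n + 2 by ring] at h
  linear_combination h

theorem IsJacobiSolution.eq_of_forall_gt [IsDomain R] {z : ℤ → R} (hA : ∀ n, A n ≠ 0)
    (hy : IsJacobiSolution A B lam y) (hz : IsJacobiSolution A B lam z) (m : ℤ)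
    (hyz : ∀ n, m < n → y n = z n) : y = z := by
  funext n
  refine Int.forall_of_forall_gt_of_two_step m hyz (fun k h1 h2 => ?_) n
  refine mul_left_cancel₀ (hA k) ?_
  rw [hy.mul_apply_eq, hz.mul_apply_eq, h1, h2]

theorem casoratian_sub_casoratian_sub_one (n : ℤ) (hu : IsJacobiSolution A B lam u)
    (hy : A (n - 1) * y (n - 1) + A n * y (n + 1) + B n * y n + f n = lam * y n) :
    casoratian A u y n - casoratian A u y (n - 1) = -(f n * u n) := by
  simp only [casoratian, sub_add_cancel]
  linear_combination u n * hy - y n * hu n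

theorem casoratian_add_sum_range (hu : IsJacobiSolution A B lam u)
    (hy : ∀ n, A (n - 1) * y (n - 1) + A n * y (n + 1) + B n * y n + f n = lam * y n)
    (N : ℕ) :
    casoratian A u y N + ∑ k ∈ Finset.range (N + 1), f k * u k =
      casoratian A u y 0 + f 0 * u 0 := by
  induction N with
  | zero => simp
  | succ N ih =>
    have h := casoratian_sub_casoratian_sub_one ((N : ℤ) + 1) hu (hy _)
    rw [add_sub_cancel_right] at h
    rw [Finset.sum_range_succ, ← ih]
    push_cast
    linear_combination h

theorem casoratian_zero_add_eq_sum (hu : IsJacobiSolution A B lam u)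
    (hy : ∀ n, A (n - 1) * y (n - 1) + A n * y (n + 1) + B n * y n + f n = lam * y n)
    {p : ℕ} (hy_supp : ∀ n : ℤ, p < n → y n = 0) (hf_supp : f (p + 1) = 0) :
    casoratian A u y 0 + f 0 * u 0 = ∑ k ∈ Finset.range (p + 1), f k * u k := by
  have hcas : casoratian A u y (p + 1) = 0 := by
    simp [casoratian, hy_supp (p + 1) (by lia), hy_supp (p + 1 + 1) (by lia)]
  rw [← casoratian_add_sum_range hu hy (p + 1), Finset.sum_range_succ]
  push_cast
  rw [hcas, hf_supp]
  ring

end JacobiRecurrence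

section Perturbation

variable {A B V K : ℤ → ℂ} {lam : ℂ} {F : ℝ → ℤ → ℂ}

theorem differentiable_of_isJacobiSolution_perturbed (hA : ∀ n, A n ≠ 0)
    (hF : ∀ t : ℝ, IsJacobiSolution A (fun n => B n + t * V n) lam (F t)) {p : ℤ}
    (hFK : ∀ t n, p < n → F t n = K n) (n : ℤ) : Differentiable ℝ fun t => F t n := by
  refine Int.forall_of_forall_gt_of_two_step (P := fun n => Differentiable ℝ fun t => F t n) p
    (fun n hn => ?_) (fun n h1 h2 => ?_) n
  · simp only [hFK _ n hn]
    exact differentiable_const _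
  · have hFn : (fun t => F t n) = fun t => (A n)⁻¹ *
        ((lam - (B (n + 1) + t * V (n + 1))) * F t (n + 1) - A (n + 1) * F t (n + 2)) :=
      funext fun t => by rw [← (hF t).mul_apply_eq, inv_mul_cancel_left₀ (hA n)]
    rw [hFn]
    fun_prop

theorem deriv_perturbed_jacobi_rec
    (hF : ∀ t : ℝ, IsJacobiSolution A (fun n => B n + t * V n) lam (F t))
    (hdiff : ∀ n, Differentiable ℝ fun t => F t n) (n : ℤ) :
    A (n - 1) * deriv (fun t => F t (n - 1)) 0 + A n * deriv (fun t => F t (n + 1)) 0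
      + B n * deriv (fun t => F t n) 0 + V n * F 0 n = lam * deriv (fun t => F t n) 0 := by
  have hF' : ∀ m, HasDerivAt (fun t => F t m) (deriv (fun t => F t m) 0) 0 :=
    fun m => (hdiff m 0).hasDerivAt
  have hcoe : HasDerivAt (fun t : ℝ => (t : ℂ)) 1 0 := by
    simpa using (hasDerivAt_id (0 : ℝ)).ofReal_comp
  have hlhs := (((hF' (n - 1)).const_mul (A (n - 1))).add ((hF' (n + 1)).const_mul (A n))).add
    ((((hcoe.mul_const (V n)).const_add (B n))).mul (hF' n))
  have hrhs := (hF' n).const_mul lam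
  rw [show (fun t => lam * F t n) = fun t => A (n - 1) * F t (n - 1) + A n * F t (n + 1)
      + (B n + t * V n) * F t n from funext fun t => (hF t n).symm] at hrhs
  have := hlhs.unique hrhs
  push_cast at this
  linear_combination this

theorem eq_of_isJacobiSolution_perturbed (hA : ∀ n, A n ≠ 0)
    (hF : ∀ t : ℝ, IsJacobiSolution A (fun n => B n + t * V n) lam (F t))
    (hK : IsJacobiSolution A B lam K) {p : ℤ} (hFK : ∀ t n, p < n → F t n = K n) : F 0 = K :=
  (by simpa using hF 0 : IsJacobiSolution A B lam (F 0)).eq_of_forall_gt hA hK p (hFK 0)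

theorem casoratian_deriv_perturbed_add_eq_sum (hA : ∀ n, A n ≠ 0)
    (hF : ∀ t : ℝ, IsJacobiSolution A (fun n => B n + t * V n) lam (F t))
    (hK : IsJacobiSolution A B lam K) {p : ℕ} (hFK : ∀ t (n : ℤ), p < n → F t n = K n)
    (hV : ∀ n : ℤ, p < n → V n = 0) {u : ℤ → ℂ} (hu : IsJacobiSolution A B lam u) :
    casoratian A u (fun n => deriv (fun t => F t n) 0) 0 + V 0 * K 0 * u 0 =
      ∑ k ∈ Finset.range (p + 1), V k * K k * u k := by
  have hF0 := eq_of_isJacobiSolution_perturbed hA hF hK hFK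
  refine casoratian_zero_add_eq_sum (f := fun n => V n * K n) hu (fun n => ?_) (fun n hn => ?_)
    (by simp [hV _ (by lia : (p : ℤ) < p + 1)])
  · simpa [hF0] using deriv_perturbed_jacobi_rec hF
      (differentiable_of_isJacobiSolution_perturbed hA hF hFK) n
  · simp [hFK _ n hn]

theorem hasDerivAt_J_of_perturbed {G H : ℤ → ℂ} {Fθ Fφ : ℝ → ℤ → ℂ} (P Q R : ℂ) {p : ℕ}
    (hA : ∀ n, A n ≠ 0) (hG : IsJacobiSolution A B lam G) (hH : IsJacobiSolution A B lam H)
    (hG0 : G 0 = 1) (hG1 : G 1 = 0) (hH0 : H 0 = 0) (hH1 : H 1 = 1)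
    (hFθ : ∀ t : ℝ, IsJacobiSolution A (fun n => B n + t * V n) lam (Fθ t))
    (hFφ : ∀ t : ℝ, IsJacobiSolution A (fun n => B n + t * V n) lam (Fφ t))
    (hFθG : ∀ t (n : ℤ), p < n → Fθ t n = G n) (hFφH : ∀ t (n : ℤ), p < n → Fφ t n = H n)
    (hV : ∀ n : ℤ, p < n → V n = 0) :
    HasDerivAt (fun t : ℝ => -(P * Fθ t 1 + Q * (Fφ t 1 - Fθ t 0)
        + t * V 0 / A 0 * (P * Fθ t 0 + Q * Fφ t 0) + R * Fφ t 0))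
      (-(1 / A 0) * ∑ k ∈ Finset.range (p + 1),
        V k * (P * G k ^ 2 + 2 * Q * G k * H k - R * H k ^ 2)) 0 := by
  have hSθθ := casoratian_deriv_perturbed_add_eq_sum hA hFθ hG hFθG hV hG
  have hSθφ := casoratian_deriv_perturbed_add_eq_sum hA hFθ hG hFθG hV hH
  have hSφθ := casoratian_deriv_perturbed_add_eq_sum hA hFφ hH hFφH hV hG
  have hSφφ := casoratian_deriv_perturbed_add_eq_sum hA hFφ hH hFφH hV hH
  simp only [casoratian, zero_add, hG0, hG1, hH0, hH1] at hSθθ hSθφ hSφθ hSφφ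
  have hFθ0 := congrFun (eq_of_isJacobiSolution_perturbed hA hFθ hG hFθG) 0
  have hFφ0 := congrFun (eq_of_isJacobiSolution_perturbed hA hFφ hH hFφH) 0
  have hdθ := fun n => (differentiable_of_isJacobiSolution_perturbed hA hFθ hFθG n 0).hasDerivAt
  have hdφ := fun n => (differentiable_of_isJacobiSolution_perturbed hA hFφ hFφH n 0).hasDerivAt
  have hc : HasDerivAt (fun t : ℝ => (t : ℂ) * V 0 / A 0) (1 * V 0 / A 0) 0 :=
    (((hasDerivAt_id (0 : ℝ)).ofReal_comp.mul_const _).div_const _)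
  have hJ := (((((hdθ 1).const_mul P).add (((hdφ 1).sub (hdθ 0)).const_mul Q)).add
    (hc.mul (((hdθ 0).const_mul P).add ((hdφ 0).const_mul Q)))).add ((hdφ 0).const_mul R)).neg
  refine hJ.congr_deriv ?_
  have hsum : ∑ k ∈ Finset.range (p + 1), V k * (P * G k ^ 2 + 2 * Q * G k * H k - R * H k ^ 2) =
      P * ∑ k ∈ Finset.range (p + 1), V k * G k * G k
        + Q * (∑ k ∈ Finset.range (p + 1), V k * G k * H k
          + ∑ k ∈ Finset.range (p + 1), V k * H k * G k)
        - R * ∑ k ∈ Finset.range (p + 1), V k * H k * H k := by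
    simp only [Finset.mul_sum, ← Finset.sum_add_distrib, ← Finset.sum_sub_distrib]
    exact Finset.sum_congr rfl fun k _ => by ring
  rw [hsum, ← hSθθ, ← hSθφ, ← hSφθ, ← hSφφ]
  simp only [Pi.add_apply, hFθ0, hFφ0, hG0, hH0, Complex.ofReal_zero]
  field_simp [hA 0]
  ring

end Perturbation

theorem stmt14_general
    (q : ℕ)
    (a b : ℤ → ℝ)
    (ha_pos : ∀ n : ℤ, 0 < a n)
    (θ φ : ℤ → Polynomial ℝ)
    (hθ_rec : ∀ n : ℤ,
      C (a (n - 1)) * θ (n - 1) + C (a n) * θ (n + 1) + C (b n) * θ n = X * θ n)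
    (hφ_rec : ∀ n : ℤ,
      C (a (n - 1)) * φ (n - 1) + C (a n) * φ (n + 1) + C (b n) * φ n = X * φ n)
    (hθ0 : θ 0 = 1) (hθ1 : θ 1 = 0) (hφ0 : φ 0 = 0) (hφ1 : φ 1 = 1)
    (φh : Polynomial ℝ)
    (p : ℕ)
    (v : ℤ → ℝ)
    (hv_supp : ∀ n : ℤ, (n < 0 ∨ (p:ℤ) < n) → v n = 0)
    (θt φt : ℝ → ℤ → Polynomial ℝ)
    (hθt_rec : ∀ (t : ℝ) (n : ℤ),
      C (a (n - 1)) * θt t (n - 1) + C (a n) * θt t (n + 1)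
        + C (b n + t * v n) * θt t n = X * θt t n)
    (hφt_rec : ∀ (t : ℝ) (n : ℤ),
      C (a (n - 1)) * φt t (n - 1) + C (a n) * φt t (n + 1)
        + C (b n + t * v n) * φt t n = X * φt t n)
    (hθt_bc : ∀ (t : ℝ) (n : ℤ), (p:ℤ) < n → θt t n = θ n)
    (hφt_bc : ∀ (t : ℝ) (n : ℤ), (p:ℤ) < n → φt t n = φ n)
    (Jf : ℂ → ℝ → ℂ)
    (hJf : ∀ (lam : ℂ) (t : ℝ), Jf lam t = -(aeval lam (φ (q:ℤ)) * aeval lam (θt t 1)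
      + aeval lam φh * (aeval lam (φt t 1) - aeval lam (θt t 0))
      + ((t * v 0 / a 0 : ℝ) : ℂ)
        * (aeval lam (φ (q:ℤ)) * aeval lam (θt t 0) + aeval lam φh * aeval lam (φt t 0))
      + aeval lam (θ ((q:ℤ) + 1)) * aeval lam (φt t 0))) :
    ∀ lam : ℂ, HasDerivAt (fun t : ℝ => Jf lam t)
      (-(1 / (a 0 : ℂ)) * ∑ k ∈ Finset.range (p + 1), (v (k : ℤ) : ℂ) *
        (aeval lam (φ (q:ℤ)) * (aeval lam (θ (k:ℤ))) ^ 2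
          + 2 * aeval lam φh * aeval lam (θ (k:ℤ)) * aeval lam (φ (k:ℤ))
          - aeval lam (θ ((q:ℤ) + 1)) * (aeval lam (φ (k:ℤ))) ^ 2)) 0 := by
  intro lam
  rw [funext (hJf lam)]
  push_cast
  exact hasDerivAt_J_of_perturbed (A := fun n => (a n : ℂ)) (V := fun n => (v n : ℂ))
    (G := fun n => aeval lam (θ n)) (H := fun n => aeval lam (φ n))
    (Fθ := fun t n => aeval lam (θt t n)) (Fφ := fun t n => aeval lam (φt t n)) _ _ _
    (fun n => Complex.ofReal_ne_zero.mpr (ha_pos n).ne')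
    (by simpa using IsJacobiSolution.aeval hθ_rec lam)
    (by simpa using IsJacobiSolution.aeval hφ_rec lam)
    (by simp [hθ0]) (by simp [hθ1]) (by simp [hφ0]) (by simp [hφ1])
    (fun t => by simpa using IsJacobiSolution.aeval (hθt_rec t) lam)
    (fun t => by simpa using IsJacobiSolution.aeval (hφt_rec t) lam)
    (fun t n hn => by simp [hθt_bc t n hn]) (fun t n hn => by simp [hφt_bc t n hn])
    (fun n hn => by simp [hv_supp n (.inr hn)])

theorem stmt14
    (q : ℕ) (hq : 1 ≤ q)
    (a b : ℤ → ℝ)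
    (ha_per : ∀ n : ℤ, a (n + (q : ℤ)) = a n)
    (hb_per : ∀ n : ℤ, b (n + (q : ℤ)) = b n)
    (ha_pos : ∀ n : ℤ, 0 < a n)
    (θ φ : ℤ → Polynomial ℝ)
    (hθ_rec : ∀ n : ℤ,
      C (a (n - 1)) * θ (n - 1) + C (a n) * θ (n + 1) + C (b n) * θ n = X * θ n)
    (hφ_rec : ∀ n : ℤ,
      C (a (n - 1)) * φ (n - 1) + C (a n) * φ (n + 1) + C (b n) * φ n = X * φ n)
    (hθ0 : θ 0 = 1) (hθ1 : θ 1 = 0) (hφ0 : φ 0 = 0) (hφ1 : φ 1 = 1)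
    (Δl : Polynomial ℝ) (hΔl : Δl = C ((2:ℝ)⁻¹) * (φ ((q:ℤ) + 1) + θ (q:ℤ)))
    (φh : Polynomial ℝ) (hφh : φh = C ((2:ℝ)⁻¹) * (φ ((q:ℤ) + 1) - θ (q:ℤ)))
    (p : ℕ) (hp : 1 ≤ p)
    (v : ℤ → ℝ)
    (hv_supp : ∀ n : ℤ, (n < 0 ∨ (p:ℤ) < n) → v n = 0)
    (hv0 : v 0 ≠ 0) (hvp : v (p:ℤ) ≠ 0)
    (θt φt : ℝ → ℤ → Polynomial ℝ)
    (hθt_rec : ∀ (t : ℝ) (n : ℤ),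
      C (a (n - 1)) * θt t (n - 1) + C (a n) * θt t (n + 1)
        + C (b n + t * v n) * θt t n = X * θt t n)
    (hφt_rec : ∀ (t : ℝ) (n : ℤ),
      C (a (n - 1)) * φt t (n - 1) + C (a n) * φt t (n + 1)
        + C (b n + t * v n) * φt t n = X * φt t n)
    (hθt_bc : ∀ (t : ℝ) (n : ℤ), (p:ℤ) < n → θt t n = θ n)
    (hφt_bc : ∀ (t : ℝ) (n : ℤ), (p:ℤ) < n → φt t n = φ n)
    (Jf : ℂ → ℝ → ℂ)
    (hJf : ∀ (lam : ℂ) (t : ℝ), Jf lam t = -(aeval lam (φ (q:ℤ)) * aeval lam (θt t 1)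
      + aeval lam φh * (aeval lam (φt t 1) - aeval lam (θt t 0))
      + ((t * v 0 / a 0 : ℝ) : ℂ)
        * (aeval lam (φ (q:ℤ)) * aeval lam (θt t 0) + aeval lam φh * aeval lam (φt t 0))
      + aeval lam (θ ((q:ℤ) + 1)) * aeval lam (φt t 0))) :
    ∀ lam : ℂ, HasDerivAt (fun t : ℝ => Jf lam t)
      (-(1 / (a 0 : ℂ)) * ∑ k ∈ Finset.range (p + 1), (v (k : ℤ) : ℂ) *
        (aeval lam (φ (q:ℤ)) * (aeval lam (θ (k:ℤ))) ^ 2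
          + 2 * aeval lam φh * aeval lam (θ (k:ℤ)) * aeval lam (φ (k:ℤ))
          - aeval lam (θ ((q:ℤ) + 1)) * (aeval lam (φ (k:ℤ))) ^ 2)) 0 :=
  stmt14_general q a b ha_pos θ φ hθ_rec hφ_rec hθ0 hθ1 hφ0 hφ1 φh p v hv_supp θt φt hθt_rec hφt_rec
    hθt_bc hφt_bc Jf hJf
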